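/- arXiv:2511.07597 — 9 statements merged into one kernel-verified Lean document; each statement's English description precedes it below -/
import Mathlib

section
/- Let G be a finite group, H and K subgroups of G, and N a normal subgroup of G. Then pr(HN/N, KN/N) ≥ pr(H,K). -/
/-- Commuting probability of two subgroups of a group. -/
noncomputable def subgroupCommProb {G : Type*} [Group G] (H K : Subgroup G) : ℚ :=
  (Nat.card {p : H × K // ((p.1 : G) * (p.2 : G) = (p.2 : G) * (p.1 : G))} : ℚ) /
    ((Nat.card H : ℚ) * (Nat.card K : ℚ))

/-- If every fiber of `f` has cardinality at most `Nat.card γ`, then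
`Nat.card α ≤ Nat.card β * Nat.card γ`. -/
lemma card_le_of_fiber_le {α β γ : Type*} [Finite α] [Finite β] [Finite γ] (f : α → β)
    (h : ∀ b, Nat.card {a // f a = b} ≤ Nat.card γ) :
    Nat.card α ≤ Nat.card β * Nat.card γ := by
  classical
  cases nonempty_fintype α
  cases nonempty_fintype β
  rw [← Nat.card_congr (Equiv.sigmaFiberEquiv f), Nat.card_eq_fintype_card,
    Fintype.card_sigma]
  calc ∑ b, Fintype.card {a // f a = b} ≤ ∑ _b : β, Nat.card γ := by
        apply Finset.sum_le_sum
        intro b _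
        rw [← Nat.card_eq_fintype_card]
        exact h b
    _ = Nat.card β * Nat.card γ := by
        rw [Finset.sum_const, smul_eq_mul, Finset.card_univ, ← Nat.card_eq_fintype_card]

/-- If `N` is normal in the finite group `G`, then
`pr(HN/N, KN/N) ≥ pr(H,K)`. -/
theorem stmt_1 {G : Type*} [Group G] [Finite G] (H K N : Subgroup G) [N.Normal] :
    subgroupCommProb (H.map (QuotientGroup.mk' N)) (K.map (QuotientGroup.mk' N)) ≥
      subgroupCommProb H K := by
  classical
  set Q := G ⧸ N
  set H' : Subgroup Q := H.map (QuotientGroup.mk' N)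
  set K' : Subgroup Q := K.map (QuotientGroup.mk' N)
  set φH : H →* H' := (QuotientGroup.mk' N).subgroupMap H with hφH
  set φK : K →* K' := (QuotientGroup.mk' N).subgroupMap K with hφK
  have hφHsurj : Function.Surjective φH := (QuotientGroup.mk' N).subgroupMap_surjective H
  have hφKsurj : Function.Surjective φK := (QuotientGroup.mk' N).subgroupMap_surjective K
  -- the commuting sets
  set C := {p : H × K // ((p.1 : G) * (p.2 : G) = (p.2 : G) * (p.1 : G))}
  set C' := {p : H' × K' // ((p.1 : Q) * (p.2 : Q) = (p.2 : Q) * (p.1 : Q))}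
  -- the map between them
  have coeφH : ∀ h : H, ((φH h : H') : Q) = QuotientGroup.mk' N (h : G) := fun h => rfl
  have coeφK : ∀ k : K, ((φK k : K') : Q) = QuotientGroup.mk' N (k : G) := fun k => rfl
  have Fcomm : ∀ x : C, ((φH x.1.1 : H') : Q) * ((φK x.1.2 : K') : Q)
      = ((φK x.1.2 : K') : Q) * ((φH x.1.1 : H') : Q) := by
    intro x
    rw [coeφH, coeφK, ← map_mul, ← map_mul, x.2]
  set F : C → C' := fun x => ⟨(φH x.1.1, φK x.1.2), Fcomm x⟩ with hF
  -- fibers of F are small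
  have hfiber : ∀ y : C', Nat.card {x : C // F x = y} ≤ Nat.card (φH.ker × φK.ker) := by
    intro y
    have : Function.Injective (fun x : {x : C // F x = y} =>
        ((⟨x.1.1.1, by
            have := congrArg (fun z : C' => z.1.1) x.2
            simpa [hF] using this⟩ : φH ⁻¹' {y.1.1}),
         (⟨x.1.1.2, by
            have := congrArg (fun z : C' => z.1.2) x.2
            simpa [hF] using this⟩ : φK ⁻¹' {y.1.2}))) := by
      rintro ⟨⟨⟨h1, k1⟩, hc1⟩, hy1⟩ ⟨⟨⟨h2, k2⟩, hc2⟩, hy2⟩ heq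
      simp only [Prod.mk.injEq, Subtype.mk.injEq] at heq
      simp [heq.1, heq.2]
    calc Nat.card {x : C // F x = y} ≤ Nat.card ((φH ⁻¹' {y.1.1}) × (φK ⁻¹' {y.1.2})) :=
          Nat.card_le_card_of_injective _ this
      _ = Nat.card (φH.ker × φK.ker) := by
          rw [Nat.card_prod, Nat.card_prod,
            Nat.card_congr (MonoidHom.fiberEquivKerOfSurjective hφHsurj y.1.1),
            Nat.card_congr (MonoidHom.fiberEquivKerOfSurjective hφKsurj y.1.2)]
  have hcard : Nat.card C ≤ Nat.card C' * (Nat.card φH.ker * Nat.card φK.ker) := by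
    have := card_le_of_fiber_le F hfiber
    rwa [Nat.card_prod] at this
  -- cardinality relations
  have hH : Nat.card H = Nat.card H' * Nat.card φH.ker := by
    rw [Subgroup.card_eq_card_quotient_mul_card_subgroup φH.ker,
      Nat.card_congr (QuotientGroup.quotientKerEquivOfSurjective φH hφHsurj).toEquiv]
  have hK : Nat.card K = Nat.card K' * Nat.card φK.ker := by
    rw [Subgroup.card_eq_card_quotient_mul_card_subgroup φK.ker,
      Nat.card_congr (QuotientGroup.quotientKerEquivOfSurjective φK hφKsurj).toEquiv]
  -- positivity
  have hH'pos : 0 < Nat.card H' := Nat.card_pos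
  have hK'pos : 0 < Nat.card K' := Nat.card_pos
  have hHpos : 0 < Nat.card H := Nat.card_pos
  have hKpos : 0 < Nat.card K := Nat.card_pos
  -- conclude
  unfold subgroupCommProb
  rw [ge_iff_le, div_le_div_iff₀ (by positivity) (by positivity)]
  have h1 : (Nat.card C : ℚ) ≤ (Nat.card C' : ℚ) * (Nat.card φH.ker * Nat.card φK.ker) := by
    exact_mod_cast hcard
  have h2 : (Nat.card H : ℚ) = Nat.card H' * Nat.card φH.ker := by exact_mod_cast hH
  have h3 : (Nat.card K : ℚ) = Nat.card K' * Nat.card φK.ker := by exact_mod_cast hK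
  have hH'q : (0:ℚ) < Nat.card H' := by exact_mod_cast hH'pos
  have hK'q : (0:ℚ) < Nat.card K' := by exact_mod_cast hK'pos
  calc (Nat.card C : ℚ) * (Nat.card H' * Nat.card K')
      ≤ ((Nat.card C' : ℚ) * (Nat.card φH.ker * Nat.card φK.ker)) *
        (Nat.card H' * Nat.card K') := by
        apply mul_le_mul_of_nonneg_right h1 (by positivity)
    _ = (Nat.card C' : ℚ) * (Nat.card H * Nat.card K) := by
        rw [h2, h3]; ring
end

section
/- Let P be a p-subgroup and Q a q-subgroup of a finite group G, where p and q are distinct primes. If [P,Q] ≠ 1 (i.e., P and Q do not commute elementwise), then pr(P,Q) ≤ 3/4. -/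
/-- If a subgroup of a finite group is proper, its cardinality is at most half. -/
lemma half_card_of_ne_top {K : Type*} [Group K] [Finite K] {H : Subgroup K} (h : H ≠ ⊤) :
    2 * Nat.card H ≤ Nat.card K := by
  have h1 : Nat.card H * H.index = Nat.card K := Subgroup.card_mul_index H
  have h2 : H.index ≠ 1 := fun hi => h (Subgroup.index_eq_one.mp hi)
  have h3 : H.index ≠ 0 := Subgroup.index_ne_zero_of_finite
  have : 2 ≤ H.index := by omega
  calc 2 * Nat.card H ≤ H.index * Nat.card H := Nat.mul_le_mul_right _ this
    _ = Nat.card K := by rw [mul_comm]; exact h1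

lemma key_count {G : Type*} [Group G] [Finite G] (P Q : Subgroup G)
    (hcomm : ⁅P, Q⁆ ≠ ⊥) :
    4 * Nat.card {x : P × Q // ((x.1 : G) * (x.2 : G) = (x.2 : G) * (x.1 : G))} ≤
      3 * (Nat.card P * Nat.card Q) := by
  classical
  have : Fintype G := Fintype.ofFinite G
  -- the commuting-pair count as a sum of centralizer sizes
  have hsig : Nat.card {x : P × Q // ((x.1 : G) * (x.2 : G) = (x.2 : G) * (x.1 : G))}
      = ∑ x : P, Nat.card {y : Q // (x : G) * (y : G) = (y : G) * (x : G)} := by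
    rw [Nat.card_congr (Equiv.subtypeProdEquivSigmaSubtype
      (fun (a : P) (b : Q) => (a : G) * (b : G) = (b : G) * (a : G)))]
    simp [Nat.card_eq_fintype_card, Fintype.card_sigma]
  rw [hsig]
  set X : Subgroup P := (Subgroup.centralizer (Q : Set G)).subgroupOf P with hX
  have hXtop : X ≠ ⊤ := by
    intro h
    exact hcomm (Subgroup.commutator_eq_bot_iff_le_centralizer.mpr
      (Subgroup.subgroupOf_eq_top.mp h))
  have hXcard : 2 * Nat.card X ≤ Nat.card P := half_card_of_ne_top hXtop
  -- pointwise bound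
  have hpt : ∀ x : P, 4 * Nat.card {y : Q // (x : G) * (y : G) = (y : G) * (x : G)} ≤
      (if (x : G) ∈ Subgroup.centralizer (Q : Set G) then 4 * Nat.card Q else 2 * Nat.card Q) := by
    intro x
    set Cx : Subgroup Q := (Subgroup.centralizer {(x : G)}).subgroupOf Q with hCx
    have hc : Nat.card {y : Q // (x : G) * (y : G) = (y : G) * (x : G)} = Nat.card Cx := by
      apply Nat.card_congr
      apply Equiv.subtypeEquivRight
      intro y
      simp [hCx, Subgroup.mem_subgroupOf, Subgroup.mem_centralizer_iff]
    rw [hc]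
    by_cases hx : (x : G) ∈ Subgroup.centralizer (Q : Set G)
    · simp only [hx, if_true]
      have : Nat.card Cx ≤ Nat.card Q := by
        have := Subgroup.card_mul_index Cx
        have hpos : 0 < Nat.card Q := Nat.card_pos
        nlinarith [Nat.one_le_iff_ne_zero.mpr (Subgroup.index_ne_zero_of_finite (H := Cx))]
      omega
    · simp only [hx, if_false]
      have hCxtop : Cx ≠ ⊤ := by
        intro h
        apply hx
        rw [Subgroup.mem_centralizer_iff]
        intro g hg
        have h2 := Subgroup.subgroupOf_eq_top.mp h hg
        rw [Subgroup.mem_centralizer_iff] at h2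
        exact (h2 (x : G) (Set.mem_singleton _)).symm
      have := half_card_of_ne_top hCxtop
      omega
  calc 4 * ∑ x : P, Nat.card {y : Q // (x : G) * (y : G) = (y : G) * (x : G)}
      = ∑ x : P, 4 * Nat.card {y : Q // (x : G) * (y : G) = (y : G) * (x : G)} := by
        rw [Finset.mul_sum]
    _ ≤ ∑ x : P, (if (x : G) ∈ Subgroup.centralizer (Q : Set G) then 4 * Nat.card Q
        else 2 * Nat.card Q) := Finset.sum_le_sum (fun x _ => hpt x)
    _ = ∑ x : P, ((if (x : G) ∈ Subgroup.centralizer (Q : Set G) then 2 * Nat.card Q else 0)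
        + 2 * Nat.card Q) := by
        apply Finset.sum_congr rfl; intro x _; split <;> omega
    _ = 2 * Nat.card Q * Nat.card X + Nat.card P * (2 * Nat.card Q) := by
        rw [Finset.sum_add_distrib, ← Finset.sum_filter]
        simp only [Finset.sum_const, smul_eq_mul, Finset.card_univ]
        congr 1
        · rw [mul_comm]
          congr 1
          have : Nat.card X = Fintype.card {a : P // (a : G) ∈ Subgroup.centralizer (Q : Set G)} := by
            rw [Nat.card_eq_fintype_card]
            apply Fintype.card_congr
            apply Equiv.subtypeEquivRight
            intro a
            simp [hX, Subgroup.mem_subgroupOf]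
          rw [this, Fintype.card_subtype]
        · simp [Nat.card_eq_fintype_card]
    _ ≤ 3 * (Nat.card P * Nat.card Q) := by nlinarith

/-- If `P` is a `p`-subgroup and `Q` a `q`-subgroup of a finite group `G`
for distinct primes `p ≠ q`, and `[P,Q] ≠ 1`, then `pr(P,Q) ≤ 3/4`. -/
theorem stmt_4 {G : Type*} [Group G] [Finite G] {p q : ℕ} (hp : p.Prime) (hq : q.Prime)
    (hpq : p ≠ q) (P Q : Subgroup G) (hP : IsPGroup p P) (hQ : IsPGroup q Q)
    (hcomm : ⁅P, Q⁆ ≠ ⊥) :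
    subgroupCommProb P Q ≤ 3 / 4 := by
  have key := key_count P Q hcomm
  have hPpos : (0 : ℚ) < Nat.card P := by exact_mod_cast Nat.card_pos
  have hQpos : (0 : ℚ) < Nat.card Q := by exact_mod_cast Nat.card_pos
  rw [subgroupCommProb, div_le_div_iff₀ (by positivity) (by norm_num)]
  have keyQ : (4 : ℚ) * Nat.card {x : P × Q // ((x.1 : G) * (x.2 : G) = (x.2 : G) * (x.1 : G))} ≤
      3 * ((Nat.card P : ℚ) * (Nat.card Q : ℚ)) := by exact_mod_cast key
  push_cast
  linarith
end

section
/- Let G be a finite group admitting an automorphism α with gcd(|α|,|G|) = 1 such that G = [G,α]. If |I_G(α)| ≤ m, then |G| ≤ f(m) for some function f depending only on m. Concretely: |G| is bounded in terms of m alone. -/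
/-- The subgroup `[G,α]` generated by all `g⁻¹ · g^α`. -/
def autCommutator {G : Type*} [Group G] (α : MulAut G) : Subgroup G :=
  Subgroup.closure (Set.range fun g : G => g⁻¹ * α g)

/-!
An element `n` of a normal subgroup fixed pointwise by `α` commutes with every `g⁻¹ g^α`
(compare `α (g n g⁻¹) = g n g⁻¹` with `α (g n g⁻¹) = g^α n (g^α)⁻¹`), so when these elements
generate `G` the core of `C_G(α)` is central and `|G : Z(G)| ≤ |G : C_G(α)|! = |I_G(α)|!`.
Schur's theorem then bounds `|G'|`. Finally `G/G'` has at most `|I_G(α)|` elements: modulo `G'`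
the map `g ↦ g⁻¹ g^α` is a homomorphism, so its image is a subgroup, and it contains the
generators of `[G,α] = G`.
-/

open Subgroup
open scoped commutatorElement

theorem MonoidHom.index_eqLocus {G H : Type*} [Group G] [Group H] (f g : G →* H) :
    (f.eqLocus g).index = Nat.card (Set.range fun x => (f x)⁻¹ * g x) := by
  have hker (a b : G) :
      Setoid.ker (fun x => (f x)⁻¹ * g x) a b ↔ QuotientGroup.rightRel (f.eqLocus g) a b := by
    rw [Setoid.ker_def, QuotientGroup.rightRel_apply]
    change _ ↔ f (b * a⁻¹) = g (b * a⁻¹)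
    rw [map_mul, map_mul, map_inv, map_inv, ← inv_mul_eq_iff_eq_mul, ← mul_assoc,
      eq_mul_inv_iff_mul_eq, inv_inv]
  rw [index_eq_card]
  exact Nat.card_congr <| (QuotientGroup.quotientRightRelEquivQuotientLeftRel _).symm.trans <|
    (Quotient.congrRight hker).symm.trans (Setoid.quotientKerEquivRange _)

theorem Subgroup.index_normalCore_dvd_factorial {G : Type*} [Group G] (H : Subgroup G)
    [H.FiniteIndex] : H.normalCore.index ∣ H.index.factorial := by
  rw [normalCore_eq_ker, index_ker, index_eq_card, ← Nat.card_perm]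
  exact card_subgroup_dvd_card _

section Schur

variable {G : Type*} [Group G]

theorem commutatorElement_mul_mul_of_mem_center (a b : G) {z w : G} (hz : z ∈ center G)
    (hw : w ∈ center G) : ⁅a * z, b * w⁆ = ⁅a, b⁆ := by
  rw [mem_center_iff] at hz hw
  simp only [commutatorElement_def, mul_inv_rev]
  calc a * z * (b * w) * (z⁻¹ * a⁻¹) * (w⁻¹ * b⁻¹)
      = a * (b * w * z) * z⁻¹ * a⁻¹ * w⁻¹ * b⁻¹ := by rw [hz (b * w)]; group
    _ = a * b * (w * a⁻¹) * w⁻¹ * b⁻¹ := by group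
    _ = a * b * a⁻¹ * b⁻¹ := by rw [← hw a⁻¹]; group

theorem card_commutatorSet_le_index_center_sq [(center G).FiniteIndex] :
    Nat.card (commutatorSet G) ≤ (center G).index ^ 2 := by
  let c : (G ⧸ center G) × (G ⧸ center G) → commutatorSet G := fun p =>
    ⟨⁅p.1.out, p.2.out⁆, p.1.out, p.2.out, rfl⟩
  have hc : Function.Surjective c := by
    rintro ⟨_, a, b, rfl⟩
    obtain ⟨z, hz⟩ := QuotientGroup.mk_out_eq_mul (center G) a
    obtain ⟨w, hw⟩ := QuotientGroup.mk_out_eq_mul (center G) b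
    refine ⟨(a, b), Subtype.ext ?_⟩
    simp only [c, hz, hw]
    exact commutatorElement_mul_mul_of_mem_center a b z.2 w.2
  calc Nat.card (commutatorSet G) ≤ Nat.card ((G ⧸ center G) × (G ⧸ center G)) :=
        Nat.card_le_card_of_surjective c hc
    _ = (center G).index ^ 2 := by rw [Nat.card_prod, index_eq_card, sq]

theorem card_commutator_le_of_index_center_le [Finite G] {k : ℕ} (hk : (center G).index ≤ k) :
    Nat.card (commutator G) ≤ k ^ (k ^ 3 + 1) := by
  set c := (center G).index
  have hc : 0 < c := Nat.pos_of_ne_zero index_ne_zero_of_finite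
  calc Nat.card (commutator G) ≤ c ^ (c * Nat.card (commutatorSet G) + 1) :=
        Nat.le_of_dvd (by positivity) (card_commutator_dvd_index_center_pow G)
    _ ≤ c ^ (c * c ^ 2 + 1) := by
        gcongr
        exact card_commutatorSet_le_index_center_sq
    _ ≤ k ^ (k ^ 3 + 1) := by
        rw [← pow_succ']
        gcongr
        omega

end Schur

namespace MulAut

variable {G : Type*} [Group G]

def fixedPoints (α : MulAut G) : Subgroup G :=
  (MonoidHom.id G).eqLocus α.toMonoidHom

theorem mem_fixedPoints {α : MulAut G} {x : G} : x ∈ fixedPoints α ↔ α x = x :=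
  eq_comm

theorem index_fixedPoints (α : MulAut G) :
    (fixedPoints α).index = Nat.card (Set.range fun x => x⁻¹ * α x) :=
  MonoidHom.index_eqLocus _ _

theorem commute_of_mem_normal_le_fixedPoints {α : MulAut G} {N : Subgroup G} [N.Normal]
    (hN : N ≤ fixedPoints α) (x : G) {n : G} (hn : n ∈ N) : Commute (x⁻¹ * α x) n := by
  have hconj : α (x * n * x⁻¹) = x * n * x⁻¹ :=
    mem_fixedPoints.mp (hN (Normal.conj_mem inferInstance n hn x))
  rw [map_mul, map_mul, map_inv, mem_fixedPoints.mp (hN hn)] at hconj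
  rw [Commute, SemiconjBy]
  calc x⁻¹ * α x * n = x⁻¹ * (α x * n * (α x)⁻¹) * α x := by group
    _ = n * (x⁻¹ * α x) := by rw [hconj]; group

theorem normal_le_center_of_le_fixedPoints {α : MulAut G} (hα : autCommutator α = ⊤)
    {N : Subgroup G} [N.Normal] (hN : N ≤ fixedPoints α) : N ≤ center G := by
  rw [← centralizer_univ, ← coe_top, ← hα, autCommutator, centralizer_closure]
  rintro n hn _ ⟨x, rfl⟩
  exact commute_of_mem_normal_le_fixedPoints hN x hn

theorem index_center_dvd_factorial_index_fixedPoints {α : MulAut G} (hα : autCommutator α = ⊤)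
    [(fixedPoints α).FiniteIndex] : (center G).index ∣ (fixedPoints α).index.factorial :=
  (index_dvd_of_le (normal_le_center_of_le_fixedPoints hα (normalCore_le _))).trans
    (index_normalCore_dvd_factorial _)

theorem card_abelianization_le_of_autCommutator_eq_top [Finite G] {α : MulAut G}
    (hα : autCommutator α = ⊤) :
    Nat.card (Abelianization G) ≤ Nat.card (Set.range fun x : G => x⁻¹ * α x) := by
  let τ : G →* Abelianization G := Abelianization.of⁻¹ * Abelianization.of.comp α.toMonoidHom
  have hτ_apply (x : G) : τ x = Abelianization.of (x⁻¹ * α x) := by simp [τ]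
  have hτ : (autCommutator α).map Abelianization.of ≤ τ.range := by
    rw [autCommutator, MonoidHom.map_closure, closure_le]
    rintro _ ⟨_, ⟨x, rfl⟩, rfl⟩
    exact ⟨x, hτ_apply x⟩
  refine Nat.card_le_card_of_surjective (fun y => Abelianization.of y.1) ?_
  intro y
  obtain ⟨g, rfl⟩ := QuotientGroup.mk_surjective y
  obtain ⟨x, hx⟩ := hτ (mem_map_of_mem _ (hα ▸ mem_top g))
  exact ⟨⟨x⁻¹ * α x, x, rfl⟩, (hτ_apply x).symm.trans hx⟩

end MulAut

/-- If a finite group `G` admits a coprime automorphism `α` with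
`G = [G,α]` and `|I_G(α)| ≤ m`, then `|G|` is bounded in terms of `m` alone. -/
theorem stmt_6 (m : ℕ) :
    ∃ C : ℕ, ∀ (G : Type) (_ : Group G) (_ : Finite G) (α : MulAut G),
      Nat.Coprime (orderOf α) (Nat.card G) →
      autCommutator α = ⊤ →
      Nat.card {x : G // ∃ g : G, g⁻¹ * α g = x} ≤ m →
      Nat.card G ≤ C := by
  refine ⟨m * m.factorial ^ (m.factorial ^ 3 + 1), fun G _ _ α _ hα hI => ?_⟩
  have hfix : (MulAut.fixedPoints α).index ≤ m := (MulAut.index_fixedPoints α).trans_le hI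
  have hcenter : (center G).index ≤ m.factorial :=
    (Nat.le_of_dvd (Nat.factorial_pos _)
      (MulAut.index_center_dvd_factorial_index_fixedPoints hα)).trans (Nat.factorial_le hfix)
  calc Nat.card G = Nat.card (Abelianization G) * Nat.card (commutator G) :=
        card_eq_card_quotient_mul_card_subgroup _
    _ ≤ m * m.factorial ^ (m.factorial ^ 3 + 1) :=
        Nat.mul_le_mul ((MulAut.card_abelianization_le_of_autCommutator_eq_top hα).trans hI)
          (card_commutator_le_of_index_center_le hcenter)
end

section
/- Let G be a finite soluble group admitting a coprime automorphism α with G = [G,α]. Then for every prime p, p divides |G| if and only if there exists an α-invariant Sylow p-subgroup P of G with I_P(α) ≠ {1}, i.e. with P not contained in C_G(α). -/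
/-!
Induction on `|G|`. A nontrivial finite soluble group has a nontrivial abelian characteristic
`q`-subgroup `V`; the automorphism `ᾱ` induced on `G/V` is again coprime with `[G/V, ᾱ] = G/V`.
If `p` divides `|G/V|`, induction gives an `ᾱ`-invariant Sylow subgroup of `G/V` not centralised
by `ᾱ`; its preimage (if `q = p`), or an `α`-invariant complement of `V` in that preimage
(if `q ≠ p`), is the required Sylow subgroup of `G`. Otherwise `V` is the normal Sylow
`p`-subgroup, and if `α` centralised it, an `α`-invariant complement `H` of `V` would contain
every `g⁻¹ g^α`, forcing `H = G` and `V = 1`.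

Invariant complements of an abelian normal Hall subgroup `V` come from the abelian case of
Schur–Zassenhaus in the semidirect product `Q ⋊ ⟨α⟩`: the complements there are the stabilisers
of a torsor under `V`, and a group of order coprime to `|V|` acting compatibly on a `V`-torsor
fixes a point, obtained by averaging a cocycle.
-/

open MulAction Subgroup
open scoped Pointwise IsMulCommutative

section Invariance

variable {G : Type*} [Group G]

theorem MulAut.apply_mem_of_smul_eq {α : MulAut G} {H : Subgroup G} (h : α • H = H) {x : G}
    (hx : x ∈ H) : α x ∈ H :=
  h ▸ smul_mem_pointwise_smul x α H hx

theorem MulAut.smul_eq_of_forall_apply_mem [Finite G] {α : MulAut G} {H : Subgroup G}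
    (h : ∀ x ∈ H, α x ∈ H) : α • H = H :=
  eq_of_le_of_card_ge (by rintro _ ⟨x, hx, rfl⟩; exact h x hx)
    (Nat.card_congr (equivSMul α H).toEquiv).le

def Subgroup.restrictMulAut (H : Subgroup G) : stabilizer (MulAut G) H →* MulAut H where
  toFun a := (equivSMul a.1 H).trans (MulEquiv.subgroupCongr a.2)
  map_one' := rfl
  map_mul' _ _ := rfl

def QuotientGroup.quotientMulAut (N : Subgroup G) [N.Normal] :
    stabilizer (MulAut G) N →* MulAut (G ⧸ N) where
  toFun a := QuotientGroup.congr N N a.1 a.2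
  map_one' := by ext x; induction x using QuotientGroup.induction_on; rfl
  map_mul' _ _ := by ext x; induction x using QuotientGroup.induction_on; rfl

end Invariance

theorem MulAction.exists_le_stabilizer_of_coprime {S Ω : Type*} [Group S] [MulAction S Ω]
    [Nonempty Ω] {V : Subgroup S} [V.Normal] [IsMulCommutative V]
    (hfree : ∀ (ω : Ω) (v : V), v • ω = ω → v = 1) (htrans : ∀ ω ω' : Ω, ∃ v : V, v • ω = ω')
    (K : Subgroup S) [Finite K] (hK : (Nat.card V).Coprime (Nat.card K)) :
    ∃ ω : Ω, K ≤ stabilizer S ω := by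
  have := Fintype.ofFinite K
  obtain ⟨ω₀⟩ := ‹Nonempty Ω›
  have hinj : ∀ v w : V, v • ω₀ = w • ω₀ → v = w := fun v w h =>
    (inv_mul_eq_one.mp (hfree ω₀ (w⁻¹ * v) (by rw [mul_smul, h, inv_smul_smul]))).symm
  choose d hd using fun k : K => htrans ω₀ ((k : S) • ω₀)
  set c : S → MulAut V := fun s => MulAut.conjNormal s
  have hc : ∀ (s : S) (v : V) (ω : Ω), c s v • s • ω = s • v • ω := fun s v ω => by
    simp only [c, Subgroup.smul_def, MulAut.conjNormal_apply, mul_smul, inv_smul_smul]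
  have hcocycle : ∀ k x : K, d (k * x) = c k (d x) * d k := fun k x => hinj _ _ <| by
    rw [hd, mul_smul, hd, Subgroup.coe_mul, mul_smul, ← hd x, hc]
  set P := ∏ x, d x
  have hP : ∀ k : K, P = c k P * d k ^ Nat.card K := fun k => calc
    P = ∏ x, d (k * x) := (Equiv.prod_comp (Equiv.mulLeft k) d).symm
    _ = c k P * d k ^ Nat.card K := by
      simp only [hcocycle, Finset.prod_mul_distrib, map_prod, Finset.prod_const,
        Finset.card_univ, Nat.card_eq_fintype_card, P]
  set w := (powCoprime hK).symm P
  have hw : w ^ Nat.card K = P := (powCoprime hK).apply_symm_apply P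
  refine ⟨w • ω₀, fun k hk => ?_⟩
  have hfix : c k w * d ⟨k, hk⟩ = w := (powCoprime hK).injective <| by
    simp only [powCoprime_apply, mul_pow, ← map_pow, hw]
    exact (hP ⟨k, hk⟩).symm
  rw [mem_stabilizer_iff, ← hc, ← hd ⟨k, hk⟩, ← mul_smul, hfix]

open SemidirectProduct in
theorem Subgroup.exists_isComplement'_le_stabilizer_of_coprime {Q : Type*} [Group Q] [Finite Q]
    {V : Subgroup Q} [V.Normal] [IsMulCommutative V] (hV : (Nat.card V).Coprime V.index)
    (A : Subgroup (MulAut Q)) (hAV : A ≤ stabilizer (MulAut Q) V)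
    (hA : (Nat.card V).Coprime (Nat.card A)) :
    ∃ H : Subgroup Q, V.IsComplement' H ∧ A ≤ stabilizer (MulAut Q) H := by
  have : Finite (Q ⋊[A.subtype] A) := Finite.of_equiv _ equivProd.symm
  set W := V.map (inl : Q →* Q ⋊[A.subtype] A)
  have : W.Normal := ⟨by
    rintro _ ⟨v, hv, rfl⟩ s
    rw [← inl_left_mul_inr_right s]
    refine ⟨s.left * A.subtype s.right v * s.left⁻¹,
      ‹V.Normal›.conj_mem _ (MulAut.apply_mem_of_smul_eq (hAV s.right.2) hv) _, ?_⟩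
    simp only [map_mul, map_inv, inl_aut, mul_inv_rev, mul_assoc]⟩
  have hWindex : W.index = V.index * Nat.card A := by
    rw [index_map_of_injective _ inl_injective, range_inl_eq_ker_rightHom, index_ker,
      MonoidHom.range_eq_top.mpr rightHom_surjective, card_top]
  have hW : (Nat.card W).Coprime W.index := by
    rw [hWindex, card_map_of_injective inl_injective]
    exact hV.mul_right hA
  obtain ⟨ω, hω⟩ := exists_le_stabilizer_of_coprime (eq_one_of_smul_eq_one hW)
    (exists_smul_eq hW) (inr : A →* Q ⋊[A.subtype] A).range
    (by rwa [card_map_of_injective inl_injective,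
      ← Nat.card_congr (MonoidHom.ofInjective inr_injective).toEquiv])
  have hT := isComplement'_stabilizer_of_coprime (α := ω) hW
  refine ⟨(stabilizer (Q ⋊[A.subtype] A) ω).comap inl,
    isComplement'_of_disjoint_and_mul_eq_univ ?_ ?_, ?_⟩
  · exact disjoint_def.mpr fun hv hh =>
      inl_injective (disjoint_def.mp hT.disjoint (mem_map_of_mem inl hv) hh)
  · refine Set.eq_univ_of_forall fun x => ?_
    obtain ⟨⟨⟨_, v, hv, rfl⟩, t⟩, hx⟩ := hT.2 (inl x)
    have ht : (t : Q ⋊[A.subtype] A) = inl (v⁻¹ * x) := by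
      rw [map_mul, map_inv, ← hx, inv_mul_cancel_left]
    exact ⟨v, hv, v⁻¹ * x, show inl (v⁻¹ * x) ∈ stabilizer _ ω from ht ▸ t.2,
      mul_inv_cancel_left v x⟩
  · intro a ha
    refine mem_stabilizer_iff.mpr (MulAut.smul_eq_of_forall_apply_mem fun h hh => ?_)
    have hinr : inr ⟨a, ha⟩ ∈ stabilizer (Q ⋊[A.subtype] A) ω := hω ⟨_, rfl⟩
    show inl (A.subtype ⟨a, ha⟩ h) ∈ stabilizer (Q ⋊[A.subtype] A) ω
    rw [inl_aut, map_inv]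
    exact mul_mem (mul_mem hinr hh) (inv_mem hinr)

theorem Subgroup.exists_isComplement'_smul_eq_of_coprime {Q : Type*} [Group Q] [Finite Q]
    {V : Subgroup Q} [V.Normal] [IsMulCommutative V] (hV : (Nat.card V).Coprime V.index)
    (β : MulAut Q) (hβV : β • V = V) (hβ : (Nat.card V).Coprime (orderOf β)) :
    ∃ H : Subgroup Q, V.IsComplement' H ∧ β • H = H := by
  obtain ⟨H, hH, hβH⟩ := exists_isComplement'_le_stabilizer_of_coprime hV (zpowers β)
    (zpowers_le.mpr hβV) (by rwa [Nat.card_zpowers])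
  exact ⟨H, hH, hβH (mem_zpowers β)⟩

theorem Group.IsSolvable.exists_characteristic_isMulCommutative_ne_bot {G : Type*} [Group G]
    [IsSolvable G] [Nontrivial G] :
    ∃ D : Subgroup G, D.Characteristic ∧ IsMulCommutative D ∧ D ≠ ⊥ := by
  classical
  have hsolv := ‹IsSolvable G›.solvable
  have hm : Nat.find hsolv ≠ 0 := fun h => top_ne_bot ((derivedSeries_zero G).symm.trans
    (h ▸ Nat.find_spec hsolv))
  refine ⟨derivedSeries G (Nat.find hsolv - 1), inferInstance, ?_,
    Nat.find_min hsolv (Nat.sub_one_lt hm)⟩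
  rw [← commutator_self_eq_bot_iff, ← derivedSeries_succ, Nat.sub_one_add_one hm]
  exact Nat.find_spec hsolv

theorem Group.IsSolvable.exists_characteristic_isPGroup {G : Type*} [Group G] [Finite G]
    [IsSolvable G] [Nontrivial G] :
    ∃ (q : ℕ) (V : Subgroup G), q.Prime ∧ V.Characteristic ∧ IsMulCommutative V ∧
      IsPGroup q V ∧ V ≠ ⊥ := by
  obtain ⟨D, hD, hDcomm, hD1⟩ := exists_characteristic_isMulCommutative_ne_bot (G := G)
  have hq := Nat.minFac_prime (mt card_eq_one.mp hD1)
  have : Fact (Nat.card D).minFac.Prime := ⟨hq⟩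
  let P : Sylow (Nat.card D).minFac D := default
  have := P.characteristic_of_normal inferInstance
  refine ⟨_, (P : Subgroup D).map D.subtype, hq, inferInstance, inferInstance,
    P.isPGroup'.map _, ?_⟩
  rw [Ne, map_eq_bot_iff_of_injective _ D.subtype_injective]
  exact P.ne_bot_of_dvd_card (Nat.minFac_dvd _)

theorem IsPGroup.eq_of_dvd_card {G : Type*} [Group G] [Finite G] {p q : ℕ} [Fact p.Prime]
    [Fact q.Prime] (hG : IsPGroup q G) (h : p ∣ Nat.card G) : p = q := by
  obtain ⟨n, hn⟩ := iff_card.mp hG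
  exact (Nat.prime_dvd_prime_iff_eq Fact.out Fact.out).mp
    (Nat.Prime.dvd_of_dvd_pow Fact.out (hn ▸ h))

theorem autCommutator_eq_top_of_surjective {G H : Type*} [Group G] [Group H] {f : G →* H}
    (hf : Function.Surjective f) {α : MulAut G} {β : MulAut H} (hfα : ∀ g, f (α g) = β (f g))
    (hα : autCommutator α = ⊤) : autCommutator β = ⊤ := by
  rw [eq_top_iff, ← MonoidHom.range_eq_top.mpr hf, MonoidHom.range_eq_map, ← hα, autCommutator,
    MonoidHom.map_closure]
  refine closure_mono ?_
  rintro _ ⟨_, ⟨g, rfl⟩, rfl⟩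
  exact ⟨f g, by rw [map_mul, map_inv, hfα]⟩

theorem autCommutator_le_of_isComplement' {G : Type*} [Group G] {V H : Subgroup G}
    (hVH : V.IsComplement' H) {α : MulAut G} (hαV : ∀ v ∈ V, α v = v) (hαH : α • H = H) :
    autCommutator α ≤ H := by
  refine (closure_le H).mpr ?_
  rintro _ ⟨g, rfl⟩
  obtain ⟨⟨⟨v, hv⟩, ⟨h, hh⟩⟩, rfl⟩ := hVH.2 g
  simp only [map_mul, hαV v hv, mul_inv_rev, mul_assoc, inv_mul_cancel_left]
  exact mul_mem (inv_mem hh) (MulAut.apply_mem_of_smul_eq hαH hh)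

section Lifting

open QuotientGroup

variable {G : Type*} [Group G] [Finite G] {p q : ℕ} [Fact p.Prime] [Fact q.Prime]
  {V : Subgroup G} [V.Normal] [IsMulCommutative V] {α : MulAut G}

theorem exists_sylow_smul_eq_map_eq_of_ne (hqp : q ≠ p) (hV : IsPGroup q V)
    (hαV : α • V = V) (hα : (Nat.card V).Coprime (orderOf α)) (S : Sylow p (G ⧸ V))
    (hQ : α • (S : Subgroup (G ⧸ V)).comap (mk' V) = (S : Subgroup (G ⧸ V)).comap (mk' V)) :
    ∃ P : Sylow p G, α • (P : Subgroup G) = P ∧ (P : Subgroup G).map (mk' V) = S := by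
  set Q := (S : Subgroup (G ⧸ V)).comap (mk' V)
  have hQmap : Q.map (mk' V) = S := map_comap_eq_self_of_surjective (mk'_surjective V) _
  set V' := V.subgroupOf Q
  have hV'card : Nat.card V' = Nat.card V := Nat.card_congr (subgroupOfEquivOfLe
    fun v hv => by simp [Q, (eq_one_iff v).mpr hv]).toEquiv
  have hV'index : V'.index = Nat.card S := calc
    V.relIndex Q = ((⊥ : Subgroup (G ⧸ V)).comap (mk' V)).relIndex Q := by
      rw [MonoidHom.comap_bot, ker_mk']
    _ = Nat.card S := by rw [relIndex_comap, hQmap, relIndex_bot_left]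
  set β := Q.restrictMulAut ⟨α, hQ⟩
  obtain ⟨H, hH, hβH⟩ := exists_isComplement'_smul_eq_of_coprime
    (by rw [hV'card, hV'index]; exact hV.coprime_card_of_ne q p hqp V _ S.isPGroup')
    β (MulAut.smul_eq_of_forall_apply_mem fun x hx =>
      mem_subgroupOf.mpr (MulAut.apply_mem_of_smul_eq hαV (mem_subgroupOf.mp hx)))
    (hV'card ▸ hα.coprime_dvd_right ((orderOf_map_dvd _ _).trans (orderOf_mk α _).dvd))
  set P := H.map Q.subtype
  obtain ⟨b, hb⟩ := IsPGroup.iff_card.mp S.isPGroup'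
  have hPcard : Nat.card P = p ^ b := by
    rw [card_map_of_injective Q.subtype_injective, ← hb, ← hV'index, hH.symm.index_eq_card]
  have hPindex : P.index = Nat.card V * (S : Subgroup (G ⧸ V)).index := by
    rw [← relIndex_mul_index (map_subtype_le H), index_comap_of_surjective _ (mk'_surjective V),
      relIndex, subgroupOf, comap_map_eq_self_of_injective Q.subtype_injective,
      hH.index_eq_card, hV'card]
  refine ⟨(IsPGroup.of_card hPcard).toSylow ?_, MulAut.smul_eq_of_forall_apply_mem ?_,
    le_antisymm (map_le_iff_le_comap.mpr (map_subtype_le H)) fun y hy => ?_⟩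
  · rw [hPindex, (Fact.out : p.Prime).dvd_mul, not_or]
    exact ⟨fun h => hqp (hV.eq_of_dvd_card h).symm, S.not_dvd_index⟩
  · rintro _ ⟨h, hh, rfl⟩
    exact ⟨β h, MulAut.apply_mem_of_smul_eq hβH hh, rfl⟩
  · obtain ⟨x, rfl⟩ := mk'_surjective V y
    obtain ⟨⟨v, h⟩, hvh⟩ := hH.2 ⟨x, hy⟩
    refine ⟨h, ⟨h, h.2, rfl⟩, ?_⟩
    rw [show x = ((v : Q) : G) * ((h : Q) : G) from congrArg Subtype.val hvh.symm, map_mul,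
      right_eq_mul]
    exact (eq_one_iff _).mpr (mem_subgroupOf.mp v.2)

theorem exists_sylow_smul_eq_map_eq (hV : IsPGroup q V) (hαV : α ∈ stabilizer (MulAut G) V)
    (hα : (Nat.card V).Coprime (orderOf α)) (S : Sylow p (G ⧸ V))
    (hS : quotientMulAut V ⟨α, hαV⟩ • (S : Subgroup (G ⧸ V)) = S) :
    ∃ P : Sylow p G, α • (P : Subgroup G) = P ∧ (P : Subgroup G).map (mk' V) = S := by
  have hQ : α • (S : Subgroup (G ⧸ V)).comap (mk' V) = (S : Subgroup (G ⧸ V)).comap (mk' V) :=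
    MulAut.smul_eq_of_forall_apply_mem fun x hx => MulAut.apply_mem_of_smul_eq hS hx
  rcases eq_or_ne q p with rfl | hqp
  · refine ⟨(S.isPGroup'.comap_of_ker_isPGroup _ (by rwa [ker_mk'])).toSylow ?_, hQ,
      map_comap_eq_self_of_surjective (mk'_surjective V) _⟩
    rw [index_comap_of_surjective _ (mk'_surjective V)]
    exact S.not_dvd_index
  · exact exists_sylow_smul_eq_map_eq_of_ne hqp hV hαV hα S hQ

theorem exists_sylow_smul_eq_apply_ne_of_not_dvd_card_quotient (hV : IsPGroup q V) (hV1 : V ≠ ⊥)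
    (hαV : α • V = V) (hα : (Nat.card V).Coprime (orderOf α)) (hGα : autCommutator α = ⊤)
    (hp : p ∣ Nat.card G) (hpV : ¬ p ∣ Nat.card (G ⧸ V)) :
    ∃ P : Sylow p G, α • (P : Subgroup G) = P ∧ ∃ x ∈ P, α x ≠ x := by
  rw [card_eq_card_quotient_mul_card_subgroup V] at hp
  obtain rfl := hV.eq_of_dvd_card ((Nat.Prime.dvd_mul Fact.out).mp hp |>.resolve_left hpV)
  set P := hV.toSylow (index_eq_card V ▸ hpV)
  refine ⟨P, hαV, ?_⟩
  by_contra! hαP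
  have hVindex : (Nat.card V).Coprime V.index := P.card_coprime_index
  obtain ⟨H, hH, hαH⟩ := exists_isComplement'_smul_eq_of_coprime hVindex α hαV hα
  have hHtop : H = ⊤ := top_le_iff.mp (hGα ▸ autCommutator_le_of_isComplement' hH hαP hαH)
  exact hV1 (isComplement'_top_right.mp (hHtop ▸ hH))

end Lifting

universe u

theorem exists_sylow_smul_eq_apply_ne {G : Type u} [Group G] [Finite G] [Group.IsSolvable G]
    {p : ℕ} [Fact p.Prime] (α : MulAut G) (hα : (orderOf α).Coprime (Nat.card G))
    (hGα : autCommutator α = ⊤) (hp : p ∣ Nat.card G) :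
    ∃ P : Sylow p G, α • (P : Subgroup G) = P ∧ ∃ x ∈ P, α x ≠ x := by
  induction hn : Nat.card G using Nat.strong_induction_on generalizing G with
  | _ n ih =>
    have : Nontrivial G := Finite.one_lt_card_iff_nontrivial.mp
      ((Nat.Prime.one_lt Fact.out).trans_le (Nat.le_of_dvd Nat.card_pos hp))
    obtain ⟨q, V, hq, hVc, hVcomm, hV, hV1⟩ :=
      Group.IsSolvable.exists_characteristic_isPGroup (G := G)
    have : Fact q.Prime := ⟨hq⟩
    have hαV : α • V = V := characteristic_iff_map_eq.mp hVc α
    have hαV' : (Nat.card V).Coprime (orderOf α) :=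
      (hα.coprime_dvd_right (card_subgroup_dvd_card V)).symm
    by_cases hpV : p ∣ Nat.card (G ⧸ V)
    swap
    · exact exists_sylow_smul_eq_apply_ne_of_not_dvd_card_quotient hV hV1 hαV hαV' hGα hp hpV
    set β := QuotientGroup.quotientMulAut V ⟨α, hαV⟩
    have hcard : Nat.card (G ⧸ V) < n := by
      rw [← hn, card_eq_card_quotient_mul_card_subgroup V]
      exact lt_mul_of_one_lt_right Nat.card_pos ((one_lt_card_iff_ne_bot V).mpr hV1)
    have hβ : (orderOf β).Coprime (Nat.card (G ⧸ V)) :=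
      (hα.coprime_dvd_left ((orderOf_map_dvd _ _).trans (orderOf_mk α _).dvd)).coprime_dvd_right
        (card_quotient_dvd_card V)
    have hGβ : autCommutator β = ⊤ :=
      autCommutator_eq_top_of_surjective (QuotientGroup.mk'_surjective V) (fun _ => rfl) hGα
    obtain ⟨S, hS, y, hyS, hne⟩ := ih _ hcard β hβ hGβ hpV rfl
    obtain ⟨P, hP, hPS⟩ := exists_sylow_smul_eq_map_eq hV hαV hαV' S hS
    obtain ⟨x, hx, rfl⟩ : y ∈ (P : Subgroup G).map (QuotientGroup.mk' V) := hPS ▸ hyS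
    exact ⟨P, hP, x, hx, fun h => hne (congrArg (QuotientGroup.mk' V) h)⟩

/-- Let `G` be a finite soluble group with a coprime automorphism `α`
such that `G = [G,α]`. Then a prime `p` divides `|G|` iff there is an `α`-invariant
Sylow `p`-subgroup `P` of `G` with `I_P(α) ≠ 1`, i.e. `P ⊄ C_G(α)`. -/
theorem stmt_7 {G : Type*} [Group G] [Finite G] [Group.IsSolvable G] (α : MulAut G)
    (hcop : Nat.Coprime (orderOf α) (Nat.card G))
    (hGA : autCommutator α = ⊤) (p : ℕ) (hp : p.Prime) :
    p ∣ Nat.card G ↔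
      ∃ P : Sylow p G, (P : Subgroup G).map α.toMonoidHom = P ∧
        ∃ x ∈ (P : Subgroup G), α x ≠ x := by
  have : Fact p.Prime := ⟨hp⟩
  refine ⟨exists_sylow_smul_eq_apply_ne α hcop hGA, ?_⟩
  rintro ⟨P, -, x, hx, hne⟩
  have hP : (P : Subgroup G) ≠ ⊥ := fun h => hne <| by
    rw [mem_bot.mp (h ▸ hx : x ∈ (⊥ : Subgroup G)), map_one]
  exact (P.isPGroup'.card_eq_or_dvd.resolve_left (mt card_eq_one.mp hP)).trans
    (card_subgroup_dvd_card _)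
end

section
/- Let a finite group A act coprimely on a finite abelian group G (i.e., gcd(|A|,|G|)=1). Then G = [G,A] × C_G(A). -/
/-- The subgroup `[G,A]` generated by all `g⁻¹ · (a • g)` for a group `A` acting
on `G` by automorphisms. -/
def actionCommutator (A : Type*) {G : Type*} [Monoid A] [Group G]
    [MulDistribMulAction A G] : Subgroup G :=
  Subgroup.closure {x : G | ∃ (g : G) (a : A), g⁻¹ * a • g = x}

/-- If a finite group `A` acts coprimely on a finite abelian group `G`,
then `G = [G,A] × C_G(A)` (internal direct product). -/
theorem stmt_8 {A G : Type*} [Group A] [Finite A] [CommGroup G] [Finite G]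
    [MulDistribMulAction A G]
    (hcop : Nat.Coprime (Nat.card A) (Nat.card G)) :
    actionCommutator A ⊓ FixedPoints.subgroup A G = ⊥ ∧
      actionCommutator A ⊔ FixedPoints.subgroup A G = ⊤ := by
  classical
  have : Fintype A := Fintype.ofFinite A
  set n := Nat.card A with hn
  have hnA : n = Fintype.card A := Nat.card_eq_fintype_card
  -- the averaging homomorphism
  let π : G →* G :=
  { toFun := fun g => ∏ a : A, a • g
    map_one' := by simp
    map_mul' := fun x y => by simp [smul_mul', Finset.prod_mul_distrib] }
  have hπdef : ∀ g : G, π g = ∏ a : A, a • g := fun g => rfl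
  -- π (a • g) = π g
  have hact : ∀ (a : A) (g : G), π (a • g) = π g := by
    intro a g
    rw [hπdef, hπdef]
    exact Fintype.prod_equiv (Equiv.mulRight a) _ _ (fun b => by
      simp [smul_smul])
  -- π g is fixed by A
  have hfix : ∀ g : G, π g ∈ FixedPoints.subgroup A G := by
    intro g a
    show a • π g = π g
    rw [hπdef]
    rw [show a • ∏ b : A, b • g = ∏ b : A, a • (b • g) from
      map_prod (MulDistribMulAction.toMonoidHom G a) _ _]
    exact Fintype.prod_equiv (Equiv.mulLeft a) _ _ (fun b => by simp [smul_smul])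
  -- π kills the action commutator
  have hker : ∀ g ∈ actionCommutator A, π g = 1 := by
    intro g hg
    have : actionCommutator A ≤ π.ker := by
      apply Subgroup.closure_le _ |>.mpr
      rintro x ⟨g, a, rfl⟩
      simp only [SetLike.mem_coe, MonoidHom.mem_ker, map_mul, map_inv, hact]
      group
    exact this hg
  -- π g = g ^ n * (element of [G,A])
  have hpow : ∀ g : G, g⁻¹ ^ n * π g ∈ actionCommutator A := by
    intro g
    have h1 : π g = g ^ n * ∏ a : A, (g⁻¹ * a • g) := by
      rw [hπdef, hnA, ← Finset.card_univ, ← Finset.prod_const, ← Finset.prod_mul_distrib]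
      simp
    rw [h1, ← mul_assoc, inv_pow, inv_mul_cancel, one_mul]
    exact Subgroup.prod_mem _ (fun a _ => Subgroup.subset_closure ⟨g, a, rfl⟩)
  constructor
  · rw [eq_bot_iff]
    rintro g ⟨hg1, hg2⟩
    have h1 : π g = 1 := hker g hg1
    have h2 : π g = g ^ n := by
      rw [hπdef]
      have : ∀ a : A, a • g = g := hg2
      simp [this, hnA]
    have hgn : g ^ n = 1 := h2 ▸ h1
    have hd1 : orderOf g ∣ n := orderOf_dvd_of_pow_eq_one hgn
    have hd2 : orderOf g ∣ Nat.card G := orderOf_dvd_natCard g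
    have : orderOf g ∣ Nat.gcd n (Nat.card G) := Nat.dvd_gcd hd1 hd2
    rw [hcop] at this
    have := Nat.eq_one_of_dvd_one this
    simpa [Subgroup.mem_bot] using orderOf_eq_one_iff.mp this
  · rw [eq_top_iff]
    intro g _
    have hcop' : (Nat.card G).Coprime n := hcop.symm
    obtain ⟨h, hh⟩ : ∃ h : G, h ^ n = g := ⟨(powCoprime hcop').symm g,
      (powCoprime hcop').apply_symm_apply g⟩
    have key : g = π h * (h⁻¹ ^ n * π h)⁻¹ := by
      rw [← hh]; group
    rw [key]
    exact Subgroup.mul_mem _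
      (Subgroup.mem_sup_right (hfix h))
      (Subgroup.mem_sup_left (Subgroup.inv_mem _ (hpow h)))
end

section
/- Let a finite group A act coprimely on a finite group G, and let N be a normal subgroup of G with [N,A] = 1. Then [G,A] centralizes N. -/
/-- If a finite group `A` acts coprimely on a finite group `G` and `N` is a
normal subgroup of `G` with `[N,A] = 1` (i.e. `A` fixes `N` elementwise), then `[G,A]`
centralizes `N`. -/
theorem stmt_9 {A G : Type*} [Group A] [Finite A] [Group G] [Finite G]
    [MulDistribMulAction A G]
    (hcop : Nat.Coprime (Nat.card A) (Nat.card G))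
    (N : Subgroup G) (hN : N.Normal) (hfix : ∀ a : A, ∀ n ∈ N, a • n = n) :
    ∀ g ∈ actionCommutator A, ∀ n ∈ N, Commute g n := by
  have key : actionCommutator A ≤ Subgroup.centralizer (N : Set G) := by
    rw [actionCommutator, Subgroup.closure_le]
    rintro x ⟨g, a, rfl⟩
    intro n hn
    have hmem : g * n * g⁻¹ ∈ N := hN.conj_mem n hn g
    have h1 : g * n * g⁻¹ = (a • g) * n * (a • g)⁻¹ := by
      have := hfix a _ hmem
      rw [smul_mul', smul_mul', smul_inv', hfix a n hn] at this
      exact this.symm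
    have : n * (g⁻¹ * a • g) = g⁻¹ * a • g * n := by
      calc n * (g⁻¹ * a • g) = g⁻¹ * (g * n * g⁻¹) * (a • g) := by group
        _ = g⁻¹ * ((a • g) * n * (a • g)⁻¹) * (a • g) := by rw [h1]
        _ = g⁻¹ * a • g * n := by group
    exact this
  intro g hg n hn
  exact (key hg n hn).symm
end

section
/- Let G be a finite metanilpotent group, let D = γ_∞(G) be the intersection of the lower central series of G, let p be a prime, K_p a Sylow p-subgroup of D, and H a Hall p'-subgroup of G. If K_p is abelian, then K_p = [K_p, H] and C_{K_p}(H) = 1; in particular K_p ∩ Z(G) = 1. -/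
/-!
Since `G/N` is nilpotent, `D = γ_∞(G)` lies in `N`, so `D` is nilpotent and its Hall subgroups
are normal in `G`: `D = K × O` with `O` a normal `p'`-complement, and `D` centralizes the abelian
`K`. Hence `[K, H] = [K, HD]` is normal, `HD` being normal because `G/D` is nilpotent. Modulo
`L = [K, H] O`, `H` centralizes `K` and `K = D = [D, G] = [K, G]`; writing `G = PH` with `P` a
Sylow `p`-subgroup gives `K = [K, P]` inside the `p`-group `KP`, so `K ≤ L` and `K = [K, H]`.
Finally the norm `a ↦ ∏_{h ∈ H} a^h` is trivial on `[K, H] = K` and is the `|H|`-th power map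
on `C_K(H)`, which is injective since `|H|` is prime to `p`.
-/

/-- The nilpotent residual `γ_∞(G)`: the intersection of the lower central series. -/
def nilpotentResidual (G : Type*) [Group G] : Subgroup G :=
  ⨅ n : ℕ, (⊤ : Subgroup G).lowerCentralSeries n

open Subgroup
open scoped Pointwise commutatorElement

namespace Subgroup

variable {G : Type*} [Group G]

theorem mem_of_pow_card_eq_one_of_coprime {S : Subgroup G} [S.Normal]
    (hS : (Nat.card S).Coprime S.index) {x : G} (hx : x ^ Nat.card S = 1) : x ∈ S := by
  rw [← QuotientGroup.eq_one_iff]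
  have hpow : (x : G ⧸ S) ^ (Nat.card S).gcd S.index = 1 :=
    pow_gcd_eq_one.mpr
      ⟨by rw [← QuotientGroup.mk_pow, hx, QuotientGroup.mk_one], pow_card_eq_one'⟩
  rwa [hS.gcd_eq_one, pow_one] at hpow

/-- A normal Hall subgroup `S` of `D` consists of the elements of `D` of order dividing `|S|`,
so every automorphism preserving `D` preserves `S`. -/
theorem normalizer_le_normalizer_of_coprime {S D : Subgroup G} (hSD : S ≤ D)
    (hDS : D ≤ normalizer (S : Set G)) (hco : (Nat.card S).Coprime (S.relIndex D)) :
    normalizer (D : Set G) ≤ normalizer (S : Set G) := by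
  have : (S.subgroupOf D).Normal := (normal_subgroupOf_iff_le_normalizer hSD).mpr hDS
  have hcard : Nat.card (S.subgroupOf D) = Nat.card S :=
    Nat.card_congr (subgroupOfEquivOfLe hSD).toEquiv
  have mem_of_pow : ∀ y ∈ D, y ^ Nat.card S = 1 → y ∈ S := fun y hy hpow =>
    mem_subgroupOf.mp <| mem_of_pow_card_eq_one_of_coprime (x := ⟨y, hy⟩) (hcard ▸ hco)
      (Subtype.ext (by rw [hcard]; exact hpow))
  have conj_mem : ∀ g ∈ normalizer (D : Set G), ∀ x ∈ S, g * x * g⁻¹ ∈ S :=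
    fun g hg x hx =>
    mem_of_pow _ ((mem_normalizer_iff.mp hg x).mp (hSD hx)) <| by
      rw [conj_pow, orderOf_dvd_iff_pow_eq_one.mp (S.orderOf_dvd_natCard hx), mul_one,
        mul_inv_cancel]
  intro g hg
  refine mem_normalizer_iff.mpr fun x => ⟨conj_mem g hg x, fun hx => ?_⟩
  simpa [mul_assoc] using conj_mem g⁻¹ (inv_mem hg) _ hx

theorem normal_of_coprime_of_isNilpotent [Group.IsNilpotent G] {S : Subgroup G}
    (hS : (Nat.card S).Coprime S.index) : S.Normal := by
  rw [← normalizer_eq_top_iff]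
  refine normalizerCondition_iff_only_full_group_self_normalizing.mp
    Group.normalizerCondition_of_isNilpotent _ (le_antisymm ?_ le_normalizer)
  exact normalizer_le_normalizer_of_coprime le_normalizer le_rfl
    (hS.coprime_dvd_right (relIndex_dvd_index_of_le le_normalizer))

theorem normal_of_le_of_coprime_relIndex {D S : Subgroup G} [D.Normal] [Group.IsNilpotent D]
    (hSD : S ≤ D) (hco : (Nat.card S).Coprime (S.relIndex D)) : S.Normal := by
  have hcard : Nat.card (S.subgroupOf D) = Nat.card S :=
    Nat.card_congr (subgroupOfEquivOfLe hSD).toEquiv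
  have hDS : D ≤ normalizer (S : Set G) := (normal_subgroupOf_iff_le_normalizer hSD).mp
    (normal_of_coprime_of_isNilpotent (hcard ▸ hco))
  rw [← normalizer_eq_top_iff, eq_top_iff, ← normalizer_eq_top_iff.mpr ‹D.Normal›]
  exact normalizer_le_normalizer_of_coprime hSD hDS hco

theorem exists_normal_disjoint_sup_eq_of_coprime_relIndex {D K : Subgroup G}
    [D.Normal] [Group.IsNilpotent D] (hKD : K ≤ D) (hco : (Nat.card K).Coprime (K.relIndex D)) :
    ∃ O : Subgroup G, O.Normal ∧ Disjoint K O ∧ K ⊔ O = D := by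
  have hcardK : Nat.card (K.subgroupOf D) = Nat.card K :=
    Nat.card_congr (subgroupOfEquivOfLe hKD).toEquiv
  have : (K.subgroupOf D).Normal := normal_of_coprime_of_isNilpotent (hcardK ▸ hco)
  obtain ⟨O', hO'⟩ := exists_right_complement'_of_coprime (hcardK ▸ hco)
  have hcardO : Nat.card (O'.map D.subtype) = K.relIndex D :=
    (card_map_of_injective D.subtype_injective).trans (IsComplement.card_right hO')
  have hrelO : (O'.map D.subtype).relIndex D = Nat.card K := by
    rw [relIndex, subgroupOf, comap_map_eq_self_of_injective D.subtype_injective,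
      hO'.index_eq_card, hcardK]
  refine ⟨O'.map D.subtype, normal_of_le_of_coprime_relIndex (map_subtype_le O')
    (by rw [hcardO, hrelO]; exact hco.symm), disjoint_of_coprime_natCard (by rwa [hcardO]), ?_⟩
  have hsup := congrArg (map D.subtype) hO'.sup_eq_top
  rwa [map_sup, subgroupOf_map_subtype, inf_of_le_left hKD, ← MonoidHom.range_eq_map,
    range_subtype] at hsup

theorem normal_sup_of_coprime_of_isNilpotent_quotient {N H : Subgroup G} [N.Normal]
    [Group.IsNilpotent (G ⧸ N)] (hH : (Nat.card H).Coprime H.index) : (H ⊔ N).Normal := by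
  have : (H.map (QuotientGroup.mk' N)).Normal := normal_of_coprime_of_isNilpotent <|
    (hH.coprime_dvd_right (index_map_dvd H (QuotientGroup.mk'_surjective N))).coprime_dvd_left
      (card_map_dvd H _)
  simpa [comap_map_eq] using this.comap (QuotientGroup.mk' N)

theorem le_of_le_sup_of_disjoint {A B C : Subgroup G} [C.Normal] (hAB : A ≤ B)
    (hB : B ≤ A ⊔ C) (hBC : Disjoint B C) : B ≤ A := by
  intro x hx
  obtain ⟨a, ha, c, hc, rfl⟩ :=
    Set.mem_mul.mp (show x ∈ (A : Set G) * C by rw [← mul_normal]; exact hB hx)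
  have hcB : c ∈ B := by simpa using B.mul_mem (B.inv_mem (hAB ha)) hx
  rw [disjoint_def.mp hBC hcB hc, mul_one]
  exact ha

theorem sup_le_centralizer_of_disjoint {K O : Subgroup G} [K.Normal] [O.Normal]
    [IsMulCommutative K] (hKO : Disjoint K O) : K ⊔ O ≤ centralizer (K : Set G) :=
  sup_le (le_centralizer_iff_isMulCommutative.mpr ‹_›) fun _ ho => mem_centralizer_iff.mpr
    fun _ hk => (commute_of_normal_of_disjoint K O ‹_› ‹_› hKO _ _ hk ho).eq

theorem commutator_sup_of_le_centralizer {K H D : Subgroup G} [D.Normal]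
    (hD : D ≤ centralizer (K : Set G)) : ⁅K, H ⊔ D⁆ = ⁅K, H⁆ := by
  refine le_antisymm (commutator_le.mpr fun k hk w hw => ?_) (commutator_mono le_rfl le_sup_left)
  obtain ⟨h, hh, d, hd, rfl⟩ :=
    Set.mem_mul.mp (show w ∈ (H : Set G) * D by rw [← mul_normal]; exact hw)
  have hdk : d * k⁻¹ = k⁻¹ * d := (mem_centralizer_iff.mp (hD hd) _ (inv_mem hk)).symm
  have : ⁅k, h * d⁆ = ⁅k, h⁆ := by
    simp only [commutatorElement_def, mul_inv_rev, ← mul_assoc]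
    rw [mul_assoc (k * h), hdk]
    group
  exact this ▸ commutator_mem_commutator hk hh

theorem commutator_top_le_of_mul_eq_univ {X P H : Subgroup G}
    (hXH : X ≤ centralizer (H : Set G)) (hPH : (P : Set G) * (H : Set G) = Set.univ) :
    ⁅X, ⊤⁆ ≤ ⁅X, P⁆ := by
  refine commutator_le.mpr fun x hx g _ => ?_
  obtain ⟨a, ha, h, hh, rfl⟩ := Set.mem_mul.mp (hPH ▸ Set.mem_univ g)
  have hxh : h * x⁻¹ = x⁻¹ * h := mem_centralizer_iff.mp (hXH (inv_mem hx)) h hh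
  have : ⁅x, a * h⁆ = ⁅x, a⁆ := by
    simp only [commutatorElement_def, mul_inv_rev, ← mul_assoc]
    rw [mul_assoc (x * a), hxh]
    group
  exact this ▸ commutator_mem_commutator hx ha

theorem eq_bot_of_le_commutator {X A : Subgroup G} [Group.IsNilpotent A] (hXA : X ≤ A)
    (hX : X ≤ ⁅X, A⁆) : X = ⊥ := by
  obtain ⟨n, hn⟩ := (isNilpotent_iff_lowerCentralSeries A).mp ‹_›
  have hle : ∀ k, X ≤ A.lowerCentralSeries k := fun k => by
    induction k with
    | zero => exact hXA
    | succ k ih => exact hX.trans (commutator_mono ih le_rfl)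
  exact le_bot_iff.mp (hn ▸ hle n)

end Subgroup

section ConjNorm

open scoped IsMulCommutative

variable {G : Type*} [Group G] (A H : Subgroup G) [A.Normal] [IsMulCommutative A] [Fintype H]

def conjNorm : A →* A := ∏ h : H, (MulAut.conjNormal (h : G)).toMonoidHom

theorem conjNorm_apply (a : A) : conjNorm A H a = ∏ h : H, MulAut.conjNormal (h : G) a :=
  MonoidHom.finsetProd_apply _ _ a

theorem conjNorm_conjNormal (b : H) (a : A) :
    conjNorm A H (MulAut.conjNormal (b : G) a) = conjNorm A H a := by
  simp only [conjNorm_apply, ← MulAut.mul_apply, ← map_mul, ← coe_mul]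
  exact Fintype.prod_equiv (Equiv.mulRight b) _ _ fun _ => rfl

theorem commutator_le_map_ker_conjNorm : ⁅A, H⁆ ≤ (conjNorm A H).ker.map A.subtype := by
  refine commutator_le.mpr fun a ha h hh => ⟨⟨a, ha⟩ * MulAut.conjNormal h ⟨a, ha⟩⁻¹, ?_, ?_⟩
  · rw [SetLike.mem_coe, MonoidHom.mem_ker, map_mul, conjNorm_conjNormal A H ⟨h, hh⟩, map_inv,
      mul_inv_cancel]
  · simp [commutatorElement_def, mul_assoc]

theorem conjNorm_eq_pow_of_mem_centralizer {a : A} (ha : (a : G) ∈ centralizer (H : Set G)) :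
    conjNorm A H a = a ^ Nat.card H := by
  rw [conjNorm_apply, Nat.card_eq_fintype_card, ← Finset.card_univ, ← Finset.prod_const]
  refine Finset.prod_congr rfl fun h _ => Subtype.ext ?_
  rw [MulAut.conjNormal_apply, mem_centralizer_iff.mp ha h h.2, mul_inv_cancel_right]

end ConjNorm

theorem inf_centralizer_eq_bot_of_le_commutator {G : Type*} [Group G] {A H : Subgroup G}
    [A.Normal] [IsMulCommutative A] [Finite H] (hco : (Nat.card A).Coprime (Nat.card H))
    (hA : A ≤ ⁅A, H⁆) : A ⊓ centralizer (H : Set G) = ⊥ := by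
  have := Fintype.ofFinite H
  refine eq_bot_iff.mpr fun x ⟨hxA, hxH⟩ => ?_
  obtain ⟨a, ha, rfl⟩ := commutator_le_map_ker_conjNorm A H (hA hxA)
  rw [SetLike.mem_coe, MonoidHom.mem_ker, conjNorm_eq_pow_of_mem_centralizer A H hxH] at ha
  have hgcd : a ^ (Nat.card A).gcd (Nat.card H) = 1 :=
    pow_gcd_eq_one.mpr ⟨pow_card_eq_one', ha⟩
  rw [hco.gcd_eq_one, pow_one] at hgcd
  simp [hgcd]

section PGroup

variable {G : Type*} [Group G] [Finite G] {p : ℕ} [Fact p.Prime]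

theorem exists_isPGroup_mul_eq_univ {H : Subgroup G} (hHp : ¬ p ∣ Nat.card H) {n : ℕ}
    (hH : H.index = p ^ n) :
    ∃ P : Subgroup G, IsPGroup p P ∧ (P : Set G) * (H : Set G) = Set.univ := by
  obtain ⟨P⟩ := (inferInstance : Nonempty (Sylow p G))
  have hGH : Nat.card G = Nat.card H * p ^ n := by rw [← hH, card_mul_index]
  have hP : Nat.card P = p ^ n := by
    rw [P.card_eq_multiplicity, hGH, Nat.factorization_mul Nat.card_pos.ne'
      (pow_ne_zero n (Fact.out : p.Prime).ne_zero)]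
    simp [Nat.factorization_eq_zero_of_not_dvd hHp, (Fact.out : p.Prime).factorization]
  refine ⟨P, P.isPGroup', IsComplement.mul_eq (isComplement'_of_coprime ?_ ?_)⟩
  · rw [hP, hGH, mul_comm]
  · rw [hP]
    exact Nat.Coprime.pow_left n ((Nat.Prime.coprime_iff_not_dvd Fact.out).mpr hHp)

theorem le_of_commutator_top_eq_self {K P H L D : Subgroup G} [K.Normal] [L.Normal]
    (hK : IsPGroup p K) (hP : IsPGroup p P) (hPH : (P : Set G) * (H : Set G) = Set.univ)
    (hKH : ⁅K, H⁆ ≤ L) (hD : ⁅D, ⊤⁆ = D) (hKD : K ≤ D) (hDL : D ≤ K ⊔ L) : K ≤ L := by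
  set π := QuotientGroup.mk' L
  have hπ : Function.Surjective π := QuotientGroup.mk'_surjective L
  have : (K.map π).Normal := ‹K.Normal›.map π hπ
  have hKD' : K.map π = D.map π := by
    refine le_antisymm (map_mono hKD) ?_
    simpa [Subgroup.map_sup, π] using map_mono (f := π) hDL
  have hKtop : K.map π ≤ ⁅K.map π, ⊤⁆ := by
    rw [hKD', ← map_top_of_surjective π hπ, ← map_commutator, hD]
  have hKH' : K.map π ≤ centralizer (H.map π : Set (G ⧸ L)) := by
    rw [← commutator_eq_bot_iff_le_centralizer, ← map_commutator, Subgroup.map_eq_bot_iff,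
      QuotientGroup.ker_mk']
    exact hKH
  have hPH' : (P.map π : Set (G ⧸ L)) * (H.map π : Set (G ⧸ L)) = Set.univ := by
    rw [coe_map, coe_map, ← Set.image_mul, hPH, Set.image_univ_of_surjective hπ]
  have : Group.IsNilpotent ↥(K.map π ⊔ P.map π) :=
    ((hK.map π).to_sup_of_normal_left (hP.map π)).isNilpotent
  have hbot := eq_bot_of_le_commutator le_sup_left <| hKtop.trans <|
    (commutator_top_le_of_mul_eq_univ hKH' hPH').trans (commutator_mono le_rfl le_sup_right)
  rwa [Subgroup.map_eq_bot_iff, QuotientGroup.ker_mk'] at hbot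

end PGroup

section NilpotentResidual

variable {G : Type*} [Group G]

instance nilpotentResidual_normal : (nilpotentResidual G).Normal :=
  ⟨fun _ hx g => mem_iInf.mpr fun n =>
    (lowerCentralSeries_normal ⊤ n).conj_mem _ (mem_iInf.mp hx n) g⟩

theorem nilpotentResidual_le_of_isNilpotent_quotient {N : Subgroup G} [N.Normal]
    [Group.IsNilpotent (G ⧸ N)] : nilpotentResidual G ≤ N := by
  obtain ⟨c, hc⟩ := Subgroup.nilpotent_iff_lowerCentralSeries.mp ‹Group.IsNilpotent (G ⧸ N)›
  have hmap : ((⊤ : Subgroup G).lowerCentralSeries c).map (QuotientGroup.mk' N) = ⊥ := by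
    rw [map_lowerCentralSeries, map_top_of_surjective _ (QuotientGroup.mk'_surjective N), hc]
  rw [Subgroup.map_eq_bot_iff, QuotientGroup.ker_mk'] at hmap
  exact (iInf_le _ c).trans hmap

theorem isNilpotent_nilpotentResidual_of_le {N : Subgroup G} [Group.IsNilpotent N]
    (hN : nilpotentResidual G ≤ N) : Group.IsNilpotent (nilpotentResidual G) := by
  obtain ⟨c, hc⟩ := (isNilpotent_iff_lowerCentralSeries N).mp ‹_›
  exact (isNilpotent_iff_lowerCentralSeries _).mpr
    ⟨c, le_bot_iff.mp (hc ▸ lowerCentralSeries_mono c hN)⟩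

variable [Finite G]

theorem exists_nilpotentResidual_eq :
    ∃ m, ∀ n, m ≤ n → nilpotentResidual G = (⊤ : Subgroup G).lowerCentralSeries n := by
  obtain ⟨m, hm⟩ :=
    WellFoundedLT.antitone_chain_condition (Subgroup.lowerCentralSeries_antitone (⊤ : Subgroup G))
  have hD : nilpotentResidual G = (⊤ : Subgroup G).lowerCentralSeries m := by
    refine le_antisymm (iInf_le _ m) (le_iInf fun n => ?_)
    rcases le_total m n with h | h
    · exact (hm n h).le
    · exact Subgroup.lowerCentralSeries_antitone _ h
  exact ⟨m, fun n hn => hD.trans (hm n hn)⟩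

theorem commutator_nilpotentResidual_top :
    ⁅nilpotentResidual G, ⊤⁆ = nilpotentResidual G := by
  obtain ⟨m, hm⟩ := exists_nilpotentResidual_eq (G := G)
  rw [hm m le_rfl, ← Subgroup.lowerCentralSeries_succ, ← hm m le_rfl, hm (m + 1) m.le_succ]

instance isNilpotent_quotient_nilpotentResidual :
    Group.IsNilpotent (G ⧸ nilpotentResidual G) := by
  obtain ⟨m, hm⟩ := exists_nilpotentResidual_eq (G := G)
  refine Subgroup.nilpotent_iff_lowerCentralSeries.mpr ⟨m, ?_⟩
  rw [← map_top_of_surjective _ (QuotientGroup.mk'_surjective _), ← map_lowerCentralSeries,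
    ← hm m le_rfl, Subgroup.map_eq_bot_iff, QuotientGroup.ker_mk']

end NilpotentResidual

/-- Let `G` be a finite metanilpotent group, `D = γ_∞(G)`, `p` a prime,
`K` a Sylow `p`-subgroup of `D`, and `H` a Hall `p'`-subgroup of `G`. If `K` is abelian
then `K = [K,H]`, `C_K(H) = 1`, and in particular `K ∩ Z(G) = 1`. -/
theorem stmt_10 {G : Type*} [Group G] [Finite G]
    (hmeta : ∃ (N : Subgroup G) (_ : N.Normal), Group.IsNilpotent N ∧ Group.IsNilpotent (G ⧸ N))
    (p : ℕ) (hp : p.Prime) (K : Subgroup G)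
    (hKD : K ≤ nilpotentResidual G) (hKp : IsPGroup p K)
    (hKSyl : ¬ p ∣ K.relIndex (nilpotentResidual G))
    (H : Subgroup G) (hHp : ¬ p ∣ Nat.card H) (hHall : ∃ n : ℕ, H.index = p ^ n)
    (hKab : ∀ x ∈ K, ∀ y ∈ K, Commute x y) :
    K = ⁅K, H⁆ ∧ K ⊓ Subgroup.centralizer (H : Set G) = ⊥ ∧
      K ⊓ Subgroup.center G = ⊥ := by
  have : Fact p.Prime := ⟨hp⟩
  have : IsMulCommutative K := ⟨⟨fun a b => Subtype.ext (hKab _ a.2 _ b.2)⟩⟩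
  obtain ⟨N, _, _, _⟩ := hmeta
  have : Group.IsNilpotent (nilpotentResidual G) :=
    isNilpotent_nilpotentResidual_of_le (nilpotentResidual_le_of_isNilpotent_quotient (N := N))
  obtain ⟨a, hKa⟩ := IsPGroup.iff_card.mp hKp
  obtain ⟨n, hn⟩ := hHall
  have hpH : p.Coprime (Nat.card H) := (Nat.Prime.coprime_iff_not_dvd hp).mpr hHp
  have hco : (Nat.card K).Coprime (K.relIndex (nilpotentResidual G)) :=
    hKa ▸ ((Nat.Prime.coprime_iff_not_dvd hp).mpr hKSyl).pow_left a
  have : K.Normal := normal_of_le_of_coprime_relIndex hKD hco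
  obtain ⟨O, _, hKO, hKOD⟩ := exists_normal_disjoint_sup_eq_of_coprime_relIndex hKD hco
  have hDK := hKOD ▸ sup_le_centralizer_of_disjoint hKO
  have : (H ⊔ nilpotentResidual G).Normal :=
    normal_sup_of_coprime_of_isNilpotent_quotient (hn ▸ (hpH.pow_left n).symm)
  obtain ⟨P, hP, hPH⟩ := exists_isPGroup_mul_eq_univ hHp hn
  have hKL : K ≤ ⁅K, H ⊔ nilpotentResidual G⁆ ⊔ O :=
    le_of_commutator_top_eq_self hKp hP hPH
      ((commutator_mono le_rfl le_sup_left).trans le_sup_left)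
      commutator_nilpotentResidual_top hKD (hKOD ▸ sup_le_sup_left le_sup_right K)
  have hKH : K = ⁅K, H⁆ := le_antisymm
    (commutator_sup_of_le_centralizer hDK ▸
      le_of_le_sup_of_disjoint (commutator_le_left _ _) hKL hKO)
    (commutator_le_left K H)
  have hC := inf_centralizer_eq_bot_of_le_commutator (hKa ▸ hpH.pow_left a) hKH.le
  exact ⟨hKH, hC, le_bot_iff.mp (hC ▸ inf_le_inf_left K (center_le_centralizer _))⟩
end

section
/- Let G be a finite group, N a normal subgroup with |N| ≤ m, and K ≤ G with K/N = F(G/N) the Fitting subgroup of G/N. Then the index [K : F(G)] is bounded in terms of m; in fact [K : F(G)] ≤ (m-1)!·m. (Key step: C_K(N) is nilpotent, has index at most |Aut(N)| ≤ (m-1)! in K, and C_K(N) ≤ F(G).) -/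
/-!
Elements of `K` centralizing `N` form a normal subgroup `C` of `G`; modulo `N` it lands in the
nilpotent group `F(G/N)`, and the kernel `C ∩ N` is central in `C`, so `C` is nilpotent and hence
`C ≤ F(G)`. Conjugation embeds `K / C` into `Aut N ≤ Sym N`, so `[K : F(G)] ≤ [K : C] ≤ |N|!`.
Nilpotency of `F(G/N)` is Fitting's theorem, proved for finite groups by identifying `F(G)` with
the join of the `p`-cores, which commute pairwise: a normal nilpotent subgroup is generated by its
Sylow subgroups, which are characteristic in it and hence normal `p`-subgroups of `G`.
-/

/-- The Fitting subgroup of a group: the join of all normal nilpotent subgroups. -/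
def fittingSubgroup (G : Type*) [Group G] : Subgroup G :=
  ⨆ (N : Subgroup G) (_ : N.Normal) (_ : Group.IsNilpotent N), N

open Subgroup

section Fitting

variable {G : Type*} [Group G]

theorem le_fittingSubgroup (H : Subgroup G) [H.Normal] [Group.IsNilpotent H] :
    H ≤ fittingSubgroup G :=
  le_iSup_of_le H <| le_iSup_of_le ‹_› <| le_iSup_of_le ‹_› le_rfl

instance fittingSubgroup_normal : (fittingSubgroup G).Normal :=
  @iSup_normal _ _ _ _ fun _ =>
    @iSup_normal _ _ _ _ fun hN => @iSup_normal _ _ _ _ fun _ => hN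

variable (G) in
def pCore (p : ℕ) : Subgroup G :=
  sSup {P | P.Normal ∧ IsPGroup p P}

instance pCore_normal (p : ℕ) : (pCore G p).Normal :=
  sSup_normal _ fun _ hP => hP.1

theorem isPGroup_pCore (p : ℕ) : IsPGroup p (pCore G p) :=
  Sylow.sSup_of_normal _ (fun _ hP => hP.2) fun _ hP => hP.1

theorem le_pCore {p : ℕ} {P : Subgroup G} [P.Normal] (hP : IsPGroup p P) : P ≤ pCore G p :=
  le_sSup ⟨‹_›, hP⟩

theorem commute_of_mem_pCore {p q : ℕ} [Fact p.Prime] [Fact q.Prime] (hpq : p ≠ q) {x y : G}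
    (hx : x ∈ pCore G p) (hy : y ∈ pCore G q) : Commute x y :=
  commute_of_normal_of_disjoint _ _ inferInstance inferInstance
    (IsPGroup.disjoint_of_ne p q hpq _ _ (isPGroup_pCore p) (isPGroup_pCore q)) x y hx hy

theorem isNilpotent_iSup_of_commute {ι : Type*} [Fintype ι] {H : ι → Subgroup G}
    [∀ i, Group.IsNilpotent (H i)]
    (hcomm : Pairwise fun i j => ∀ x y : G, x ∈ H i → y ∈ H j → Commute x y) :
    Group.IsNilpotent (⨆ i, H i : Subgroup G) := by
  rw [← noncommPiCoprod_range (hcomm := hcomm)]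
  exact Group.nilpotent_of_surjective _ (noncommPiCoprod hcomm).rangeRestrict_surjective

theorem isNilpotent_iSup_pCore [Finite G] :
    Group.IsNilpotent (⨆ p : (Nat.card G).primeFactors, pCore G p : Subgroup G) := by
  have hprime (p : (Nat.card G).primeFactors) : Fact (p : ℕ).Prime :=
    ⟨Nat.prime_of_mem_primeFactors p.2⟩
  have (p : (Nat.card G).primeFactors) : Group.IsNilpotent (pCore G p) :=
    (isPGroup_pCore (p : ℕ)).isNilpotent
  exact isNilpotent_iSup_of_commute fun p q hpq _ _ =>
    commute_of_mem_pCore (Subtype.coe_injective.ne hpq)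

theorem Subgroup.eq_top_of_forall_sylow_le [Finite G] {H : Subgroup G}
    (h : ∀ p ∈ (Nat.card G).primeFactors, ∃ P : Sylow p G, (P : Subgroup G) ≤ H) : H = ⊤ := by
  refine eq_top_of_card_eq H (Nat.dvd_antisymm (card_subgroup_dvd_card H) ?_)
  refine (Nat.dvd_iff_prime_pow_dvd_dvd _ _).2 fun p k hp hpk => ?_
  rcases k.eq_zero_or_pos with rfl | hk
  · exact one_dvd _
  have hpG : p ∈ (Nat.card G).primeFactors :=
    Nat.mem_primeFactors.2 ⟨hp, (dvd_pow_self p hk.ne').trans hpk, Nat.card_pos.ne'⟩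
  have : Fact p.Prime := ⟨hp⟩
  obtain ⟨P, hPH⟩ := h p hpG
  exact (P.pow_dvd_card_of_pow_dvd_card hpk).trans (card_dvd_of_le hPH)

theorem le_iSup_pCore [Finite G] (H : Subgroup G) [H.Normal] [Group.IsNilpotent H] :
    H ≤ ⨆ p : (Nat.card G).primeFactors, pCore G p := by
  rw [← subgroupOf_eq_top]
  refine eq_top_of_forall_sylow_le fun p hp => ⟨default, ?_⟩
  have : Fact p.Prime := ⟨Nat.prime_of_mem_primeFactors hp⟩
  have hpG : p ∈ (Nat.card G).primeFactors :=
    Nat.primeFactors_mono (card_subgroup_dvd_card H) Nat.card_pos.ne' hp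
  let P : Sylow p H := default
  have : (P : Subgroup H).Characteristic := Sylow.characteristic_of_normal _ inferInstance
  exact map_le_iff_le_comap.1 <| (le_pCore (P.isPGroup'.map H.subtype)).trans <|
    le_iSup (fun q : (Nat.card G).primeFactors => pCore G q) ⟨p, hpG⟩

theorem fittingSubgroup_eq_iSup_pCore [Finite G] :
    fittingSubgroup G = ⨆ p : (Nat.card G).primeFactors, pCore G p := by
  have := isNilpotent_iSup_pCore (G := G)
  refine le_antisymm ?_ (le_fittingSubgroup _)
  exact iSup_le fun H => iSup_le fun _ => iSup_le fun _ => le_iSup_pCore H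

theorem fittingSubgroup_isNilpotent [Finite G] : Group.IsNilpotent (fittingSubgroup G) :=
  fittingSubgroup_eq_iSup_pCore (G := G) ▸ isNilpotent_iSup_pCore

end Fitting

section Centralizer

variable {G : Type*} [Group G]

theorem isNilpotent_of_map_le_of_le_centralizer_ker {Q : Type*} [Group Q] {f : G →* Q}
    {H : Subgroup G} {L : Subgroup Q} [Group.IsNilpotent L] (hHL : H.map f ≤ L)
    (hH : H ≤ centralizer f.ker) : Group.IsNilpotent H := by
  refine Subgroup.isNilpotent_of_ker_le_center
    ((f.comp H.subtype).codRestrict L fun h => hHL ⟨h, h.2, rfl⟩) fun x hx => ?_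
  have hxker : (x : G) ∈ f.ker := congrArg Subtype.val hx
  exact mem_center_iff.2 fun y => Subtype.ext (mem_centralizer_iff.1 (hH y.2) x hxker).symm

theorem MulAut.ker_conjNormal (N : Subgroup G) [N.Normal] :
    (MulAut.conjNormal : G →* MulAut N).ker = centralizer N := by
  ext g
  simp only [MonoidHom.mem_ker, MulEquiv.ext_iff, Subtype.ext_iff, MulAut.conjNormal_apply,
    MulAut.one_apply, mem_centralizer_iff, SetLike.mem_coe, Subtype.forall]
  exact forall₂_congr fun _ _ => by rw [mul_inv_eq_iff_eq_mul, eq_comm]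

theorem relIndex_centralizer_dvd_card_mulAut (N : Subgroup G) [N.Normal] (K : Subgroup G) :
    (centralizer N).relIndex K ∣ Nat.card (MulAut N) := by
  rw [← MulAut.ker_conjNormal, relIndex_ker]
  exact card_subgroup_dvd_card _

theorem card_mulAut_le_factorial (M : Type*) [Mul M] [Finite M] :
    Nat.card (MulAut M) ≤ (Nat.card M).factorial := by
  rw [← Nat.card_perm]
  exact Nat.card_le_card_of_injective _ MulEquiv.toEquiv_injective

end Centralizer

/-- If `N ⊴ G` with `|N| ≤ m` and `K` is the preimage in `G` of the
Fitting subgroup of `G/N`, then `[K : F(G)] ≤ (m-1)!·m`. -/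
theorem stmt_11 {G : Type*} [Group G] [Finite G] (m : ℕ)
    (N : Subgroup G) [N.Normal] (hN : Nat.card N ≤ m)
    (K : Subgroup G)
    (hK : K = (fittingSubgroup (G ⧸ N)).comap (QuotientGroup.mk' N)) :
    (fittingSubgroup G).relIndex K ≤ (m - 1).factorial * m := by
  have : K.Normal := hK ▸ fittingSubgroup_normal.comap _
  have : Group.IsNilpotent (fittingSubgroup (G ⧸ N)) := fittingSubgroup_isNilpotent
  have : Group.IsNilpotent (centralizer N ⊓ K : Subgroup G) :=
    isNilpotent_of_map_le_of_le_centralizer_ker (map_le_iff_le_comap.2 (inf_le_right.trans hK.le))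
      (by rw [QuotientGroup.ker_mk']; exact inf_le_left)
  have hm : m ≠ 0 := (Nat.card_pos.trans_le hN).ne'
  calc (fittingSubgroup G).relIndex K
      ≤ (centralizer N ⊓ K).relIndex K :=
        relIndex_le_of_le_left (le_fittingSubgroup _)
          (isFiniteRelIndex_iff_finiteIndex.2 inferInstance).relIndex_ne_zero
    _ = (centralizer N).relIndex K := inf_relIndex_right _ _
    _ ≤ Nat.card (MulAut N) :=
        Nat.le_of_dvd Nat.card_pos (relIndex_centralizer_dvd_card_mulAut N K)
    _ ≤ (Nat.card N).factorial := card_mulAut_le_factorial N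
    _ ≤ m.factorial := Nat.factorial_le hN
    _ = (m - 1).factorial * m := by rw [mul_comm, Nat.mul_factorial_pred hm]
end

section
/- Let G be a finite soluble group admitting a coprime automorphism α with G = [G,α], and suppose |I_{F(G)}(α)| ≤ n where F(G) is the Fitting subgroup. Then there exists an integer j ≤ n! such that α^j centralizes F(G), and consequently α^j = 1; in particular the order of α is at most n!. -/
/-!
Since `α` permutes the set `I = I_{F(G)}(α)` of at most `n` elements, `β = α^{n!}` fixes `I`
pointwise, hence fixes every `g⁻¹ g^{α^k}` with `g ∈ F(G)`, a product of elements of `I`.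
For a coprime automorphism `β`, fixing `t = g⁻¹ g^β` forces `g^{β^k} = g t^k`, so `t^{|β|} = 1`
and `t = 1`; thus `β` centralizes `F(G)`. Then every `g⁻¹ g^β` centralizes `F(G)`, so lies in
`F(G)` because `C_G(F(G)) ≤ F(G)` in a soluble group, and is fixed by `β`; the same argument
gives `β = 1`.
-/

open Subgroup

theorem Function.Injective.iterate_factorial_apply {X : Type*} {f : X → X}
    (hf : Function.Injective f) {S : Set X} (hS : S.MapsTo f S) [Finite S] {n : ℕ}
    (hn : Nat.card S ≤ n) {x : X} (hx : x ∈ S) : f^[n.factorial] x = x := by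
  let σ : Equiv.Perm S :=
    Equiv.ofBijective _ (Finite.injective_iff_bijective.1 (hS.restrict_inj.2 hf.injOn))
  have hσ : σ ^ n.factorial = 1 := by
    refine orderOf_dvd_iff_pow_eq_one.1 ((orderOf_dvd_natCard σ).trans ?_)
    rw [Nat.card_perm]
    exact Nat.factorial_dvd_factorial hn
  have hσx : (⇑(σ ^ n.factorial)) ⟨x, hx⟩ = ⟨x, hx⟩ := by rw [hσ]; rfl
  rw [Equiv.Perm.coe_pow] at hσx
  rw [← hS.coe_iterate_restrict ⟨x, hx⟩ n.factorial]
  exact congrArg Subtype.val hσx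

theorem MulAut.coe_pow {M : Type*} [Mul M] (α : MulAut M) (k : ℕ) : ⇑(α ^ k) = (⇑α)^[k] :=
  hom_coe_pow _ rfl (fun _ _ => rfl) α k

section Fitting

variable {G : Type*} [Group G]

theorem le_fittingSubgroup_s12 {N : Subgroup G} (hN : N.Normal) (hnil : Group.IsNilpotent N) :
    N ≤ fittingSubgroup G :=
  le_iSup_of_le N <| le_iSup_of_le hN <| le_iSup_of_le hnil le_rfl

instance fittingSubgroup_characteristic : (fittingSubgroup G).Characteristic :=
  characteristic_iff_map_le.2 fun ϕ => by
    rw [map_le_iff_le_comap]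
    refine iSup_le fun N => iSup_le fun hN => iSup_le fun hnil => ?_
    rw [← map_le_iff_le_comap]
    exact le_fittingSubgroup_s12 (hN.map _ ϕ.surjective)
      (Group.nilpotent_of_mulEquiv (N.equivMapOfInjective _ ϕ.injective))

theorem Subgroup.isNilpotent_of_commutator_le_centralizer {N : Subgroup G}
    (h : ⁅N, N⁆ ≤ centralizer (N : Set G)) : Group.IsNilpotent N := by
  refine isNilpotent_of_ker_le_center (Abelianization.of (G := N)) ?_
  rw [Abelianization.ker_of]
  intro x hx
  have hxN : (x : G) ∈ ⁅N, N⁆ := N.map_subtype_commutator ▸ mem_map_of_mem _ hx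
  exact mem_center_iff.2 fun y => Subtype.ext (mem_centralizer_iff.1 (h hxN) y y.2)

theorem le_fittingSubgroup_of_commutator_le {N : Subgroup G} (hN : N.Normal)
    (hNC : N ≤ centralizer (fittingSubgroup G : Set G)) (h : ⁅N, N⁆ ≤ fittingSubgroup G) :
    N ≤ fittingSubgroup G :=
  le_fittingSubgroup_s12 hN <| isNilpotent_of_commutator_le_centralizer <|
    h.trans (le_centralizer_iff.1 hNC)

theorem centralizer_fittingSubgroup_le [Group.IsSolvable G] :
    centralizer (fittingSubgroup G : Set G) ≤ fittingSubgroup G := by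
  set C := centralizer (fittingSubgroup G : Set G)
  obtain ⟨m, hm⟩ := Group.IsSolvable.solvable (G := G)
  suffices ∀ k, C ⊓ derivedSeries G k ≤ fittingSubgroup G → C ≤ fittingSubgroup G from
    this m (by simp [hm])
  intro k
  induction k with
  | zero => simp
  | succ k ih =>
    refine fun hk => ih (le_fittingSubgroup_of_commutator_le inferInstance inf_le_left
      (le_trans ?_ hk))
    rw [derivedSeries_succ]
    exact le_inf (commutator_le_right _ _ |>.trans inf_le_left)
      (commutator_mono inf_le_right inf_le_right)

end Fitting

namespace MulAut

variable {G : Type*} [Group G] {β : MulAut G}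

theorem apply_eq_self_of_mem_closure {s : Set G} (h : ∀ x ∈ s, β x = x) {x : G}
    (hx : x ∈ closure s) : β x = x :=
  (closure_le (MonoidHom.eqLocus β.toMonoidHom (MonoidHom.id G))).2 h hx

theorem apply_eq_self_of_apply_inv_mul_apply_eq (hcop : (orderOf β).Coprime (Nat.card G))
    {g : G} (h : β (g⁻¹ * β g) = g⁻¹ * β g) : β g = g := by
  set t := g⁻¹ * β g
  have hβg : β g = g * t := (mul_inv_cancel_left g (β g)).symm
  have hpow : ∀ k : ℕ, (β ^ k) g = g * t ^ k := by
    intro k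
    induction k with
    | zero => simp
    | succ k ih => rw [pow_succ', mul_apply, ih, map_mul, map_pow, h, hβg, pow_succ', mul_assoc]
  have ht : t ^ orderOf β = 1 := by
    simpa [pow_orderOf_eq_one] using hpow (orderOf β)
  have : orderOf t = 1 :=
    Nat.eq_one_of_dvd_coprimes hcop (orderOf_dvd_of_pow_eq_one ht) (orderOf_dvd_natCard t)
  rw [hβg, orderOf_eq_one_iff.1 this, mul_one]

theorem inv_mul_apply_mem_centralizer {N : Subgroup G} [N.Normal] (hβ : ∀ x ∈ N, β x = x)
    (g : G) : g⁻¹ * β g ∈ centralizer (N : Set G) := by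
  refine mem_centralizer_iff.2 fun x hx => ?_
  have hconj : β g * x * (β g)⁻¹ = g * x * g⁻¹ := by
    have := hβ _ (Normal.conj_mem ‹_› x hx g)
    rwa [map_mul, map_mul, map_inv, hβ x hx] at this
  calc x * (g⁻¹ * β g) = g⁻¹ * (g * x * g⁻¹) * β g := by group
    _ = g⁻¹ * (β g * x * (β g)⁻¹) * β g := by rw [hconj]
    _ = g⁻¹ * β g * x := by group

theorem eq_one_of_forall_mem_fittingSubgroup [Group.IsSolvable G]
    (hcop : (orderOf β).Coprime (Nat.card G)) (hβ : ∀ x ∈ fittingSubgroup G, β x = x) :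
    β = 1 :=
  MulEquiv.ext fun g => apply_eq_self_of_apply_inv_mul_apply_eq hcop <|
    hβ _ (centralizer_fittingSubgroup_le (inv_mul_apply_mem_centralizer hβ g))

end MulAut

section AutCommutatorSet

variable {G : Type*} [Group G] {α : MulAut G} {H : Subgroup G}

/-- The set `I_H(α)`. -/
def autCommutatorSet (α : MulAut G) (H : Subgroup G) : Set G :=
  {x | ∃ g ∈ H, g⁻¹ * α g = x}

theorem mapsTo_autCommutatorSet (hH : Set.MapsTo α H H) :
    Set.MapsTo α (autCommutatorSet α H) (autCommutatorSet α H) := by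
  rintro _ ⟨g, hg, rfl⟩
  exact ⟨α g, hH hg, by rw [map_mul, map_inv]⟩

theorem inv_mul_pow_apply_mem_closure_autCommutatorSet (hH : Set.MapsTo α H H) {g : G}
    (hg : g ∈ H) (k : ℕ) : g⁻¹ * (α ^ k) g ∈ closure (autCommutatorSet α H) := by
  induction k with
  | zero => simp [one_mem]
  | succ k ih =>
    have hk : (α ^ k) g ∈ H := by rw [MulAut.coe_pow]; exact hH.iterate k hg
    have hsplit : g⁻¹ * (α ^ (k + 1)) g =
        (g⁻¹ * (α ^ k) g) * (((α ^ k) g)⁻¹ * α ((α ^ k) g)) := by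
      rw [pow_succ', MulAut.mul_apply]
      group
    rw [hsplit]
    exact mul_mem ih (subset_closure ⟨_, hk, rfl⟩)

end AutCommutatorSet

theorem stmt_12_general {G : Type*} [Group G] [Finite G] [Group.IsSolvable G] (α : MulAut G)
    (hcop : Nat.Coprime (orderOf α) (Nat.card G))
    (n : ℕ)
    (hI : Nat.card {x : G // ∃ g ∈ fittingSubgroup G, g⁻¹ * α g = x} ≤ n) :
    (∃ j : ℕ, 1 ≤ j ∧ j ≤ n.factorial ∧
      (∀ x ∈ fittingSubgroup G, (α ^ j) x = x) ∧ α ^ j = 1) ∧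
      orderOf α ≤ n.factorial := by
  set F := fittingSubgroup G
  have hF : Set.MapsTo α F F := fun _ hg =>
    characteristic_iff_map_le.1 inferInstance α (mem_map_of_mem _ hg)
  have hcop' : (orderOf (α ^ n.factorial)).Coprime (Nat.card G) :=
    hcop.coprime_dvd_left (orderOf_pow_dvd _)
  have hfixI : ∀ x ∈ autCommutatorSet α F, (α ^ n.factorial) x = x := fun x hx => by
    rw [MulAut.coe_pow]
    exact α.injective.iterate_factorial_apply (mapsTo_autCommutatorSet hF) hI hx
  have hfixF : ∀ g ∈ F, (α ^ n.factorial) g = g := fun g hg =>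
    MulAut.apply_eq_self_of_apply_inv_mul_apply_eq hcop' <| MulAut.apply_eq_self_of_mem_closure
      hfixI (inv_mul_pow_apply_mem_closure_autCommutatorSet hF hg _)
  have hone : α ^ n.factorial = 1 := MulAut.eq_one_of_forall_mem_fittingSubgroup hcop' hfixF
  exact ⟨⟨n.factorial, n.factorial_pos, le_rfl, hfixF, hone⟩,
    orderOf_le_of_pow_eq_one n.factorial_pos hone⟩

/-- Let `G` be a finite soluble group with a coprime automorphism `α`,
`G = [G,α]`, and `|I_{F(G)}(α)| ≤ n`. Then there is `1 ≤ j ≤ n!` such that `α^j`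
centralizes `F(G)` and `α^j = 1`; in particular `|α| ≤ n!`. -/
theorem stmt_12 {G : Type*} [Group G] [Finite G] [Group.IsSolvable G] (α : MulAut G)
    (hcop : Nat.Coprime (orderOf α) (Nat.card G))
    (hGA : autCommutator α = ⊤) (n : ℕ)
    (hI : Nat.card {x : G // ∃ g ∈ fittingSubgroup G, g⁻¹ * α g = x} ≤ n) :
    (∃ j : ℕ, 1 ≤ j ∧ j ≤ n.factorial ∧
      (∀ x ∈ fittingSubgroup G, (α ^ j) x = x) ∧ α ^ j = 1) ∧
      orderOf α ≤ n.factorial :=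
  stmt_12_general α hcop n hI
end
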